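/- For the encoding–decoding round trip with scaling: if m ∈ R encodes z via the canonical embedding with scaling factor Δ, and e ∈ R is an error polynomial with ||σ(e)||_∞ ≤ B', then the decoding of m + e equals the decoding of m (i.e., rounding to the nearest Gaussian integer vector recovers z) provided Δ^{-1} B' < 1/2. -/

import Mathlib

open Polynomial

theorem round_intCast_add_of_abs_lt {α : Type*} [Field α] [LinearOrder α]
    [IsStrictOrderedRing α] [FloorRing α] (n : ℤ) {x : α} (hx : |x| < 1 / 2) :
    round ((n : α) + x) = n := by
  obtain ⟨hlo, hhi⟩ := abs_lt.1 hx
  rw [round_intCast_add, round_eq_zero_iff.2 ⟨hlo.le, hhi⟩, add_zero]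

theorem GaussianInt.round_re_im_add_of_norm_lt (z : GaussianInt) {w : ℂ} (hw : ‖w‖ < 1 / 2) :
    (⟨round ((z : ℂ) + w).re, round ((z : ℂ) + w).im⟩ : GaussianInt) = z := by
  have hre : round ((z : ℂ) + w).re = z.re := by
    rw [Complex.add_re, ← GaussianInt.intCast_re]
    exact round_intCast_add_of_abs_lt _ ((Complex.abs_re_le_norm w).trans_lt hw)
  have him : round ((z : ℂ) + w).im = z.im := by
    rw [Complex.add_im, ← GaussianInt.intCast_im]
    exact round_intCast_add_of_abs_lt _ ((Complex.abs_im_le_norm w).trans_lt hw)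
  exact Zsqrtd.ext hre him

theorem norm_div_ofReal_lt_of_norm_le {w : ℂ} {Δ B : ℝ} (hΔ : 0 < Δ) (hw : ‖w‖ ≤ B)
    {c : ℝ} (hc : Δ⁻¹ * B < c) : ‖w / (Δ : ℂ)‖ < c := by
  rw [norm_div, Complex.norm_real, Real.norm_of_nonneg hΔ.le, div_eq_inv_mul]
  exact (mul_le_mul_of_nonneg_left hw (inv_nonneg.2 hΔ.le)).trans_lt hc

theorem stmt_19_general (N : ℕ) (ζ : ℂ) (Δ : ℝ) (hΔ : 0 < Δ) (B' : ℝ)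
    (m e : ℤ[X]) (z : Fin (N / 2) → GaussianInt)
    (hm : ∀ j : Fin (N / 2),
      Polynomial.aeval (ζ ^ (2 * (j : ℕ) + 1)) m =
        (Δ : ℂ) * (((z j).re : ℂ) + ((z j).im : ℂ) * Complex.I))
    (he : ∀ j : Fin (N / 2), ‖Polynomial.aeval (ζ ^ (2 * (j : ℕ) + 1)) e‖ ≤ B')
    (hsmall : Δ⁻¹ * B' < 1 / 2) :
    ∀ j : Fin (N / 2),
      (⟨round ((Polynomial.aeval (ζ ^ (2 * (j : ℕ) + 1)) (m + e) / (Δ : ℂ)).re),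
        round ((Polynomial.aeval (ζ ^ (2 * (j : ℕ) + 1)) (m + e) / (Δ : ℂ)).im)⟩ :
          GaussianInt) = z j := by
  intro j
  have hdecode : Polynomial.aeval (ζ ^ (2 * (j : ℕ) + 1)) (m + e) / (Δ : ℂ) =
      (z j : ℂ) + Polynomial.aeval (ζ ^ (2 * (j : ℕ) + 1)) e / (Δ : ℂ) := by
    rw [map_add, hm j, add_div, ← GaussianInt.toComplex_def,
      mul_div_cancel_left₀ _ (Complex.ofReal_ne_zero.2 hΔ.ne')]
  rw [hdecode]
  exact GaussianInt.round_re_im_add_of_norm_lt _ (norm_div_ofReal_lt_of_norm_le hΔ (he j) hsmall)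

/-- Encoding–decoding round trip with scaling: if `m ∈ ℤ[x]/(x^N+1)` encodes the Gaussian
integer vector `z` via the canonical embedding with scaling factor `Δ` and `e` is an error
polynomial with `‖σ(e)‖_∞ ≤ B'`, then provided `Δ⁻¹·B' < 1/2`, decoding `m + e`
(dividing by `Δ` and rounding each coordinate to the nearest Gaussian integer) still
recovers `z`. -/
theorem stmt_19 (M N : ℕ) (hM : 2 < M) (hpow : ∃ k : ℕ, M = 2 ^ k) (hN : N = M / 2)
    (ζ : ℂ) (hζ : ζ = Complex.exp (2 * Real.pi * Complex.I / M))
    (Δ : ℝ) (hΔ : 0 < Δ) (B' : ℝ)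
    (m e : ℤ[X]) (z : Fin (N / 2) → GaussianInt)
    (hm : ∀ j : Fin (N / 2),
      Polynomial.aeval (ζ ^ (2 * (j : ℕ) + 1)) m =
        (Δ : ℂ) * (((z j).re : ℂ) + ((z j).im : ℂ) * Complex.I))
    (he : ∀ j : Fin (N / 2), ‖Polynomial.aeval (ζ ^ (2 * (j : ℕ) + 1)) e‖ ≤ B')
    (hsmall : Δ⁻¹ * B' < 1 / 2) :
    ∀ j : Fin (N / 2),
      (⟨round ((Polynomial.aeval (ζ ^ (2 * (j : ℕ) + 1)) (m + e) / (Δ : ℂ)).re),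
        round ((Polynomial.aeval (ζ ^ (2 * (j : ℕ) + 1)) (m + e) / (Δ : ℂ)).im)⟩ :
          GaussianInt) = z j :=
  stmt_19_general N ζ Δ hΔ B' m e z hm he hsmall
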